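/- arXiv:2504.16790 — 7 statements merged into one kernel-verified Lean document; each statement's English description precedes it below -/
import Mathlib

section
/- Let 0 < Lint < Lext and 0 < b < Lext be real numbers, and set Φ(β) := Lext + b·cos β. Let H : ℝ → ℝ and F : ℝ × ℝ → ℝ be twice continuously differentiable on an open set containing (Lint, Lext] and (Lint, Lext] × ℝ respectively, with H > 0 and F > 0 there, and suppose F(Lext, β) = Φ(β)² for all β and H(Lext) = 1. Fix ϑ ∈ [0,1]. Then, as (ℓ, β) → (Lext, π) with ℓ < Lext, the scalar Z_ϑ(ℓ,β) converges to the value −1/(b(Lext−b)) + ((1−ϑ²)/4)·[(∂ℓF(Lext,π)/(Lext−b)²)² − 2·∂ℓ²F(Lext,π)/(Lext−b)²] + (ϑ²/4)·[2H''(Lext) − H'(Lext)² + H'(Lext)·∂ℓF(Lext,π)/(Lext−b)²], where ∂ℓF(Lext,π) and ∂ℓ²F(Lext,π) denote the (one-sided) first and second partial derivatives in ℓ evaluated at (Lext, π). -/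
open Real Filter Set

/-- First partial derivative of `F` with respect to its first argument `ℓ`. -/
noncomputable def pdl (F : ℝ × ℝ → ℝ) (l β : ℝ) : ℝ := deriv (fun x => F (x, β)) l

/-- Second partial derivative of `F` with respect to its first argument `ℓ`. -/
noncomputable def pdll (F : ℝ × ℝ → ℝ) (l β : ℝ) : ℝ := deriv (fun x => pdl F x β) l

/-- First partial derivative of `F` with respect to its second argument `β`. -/
noncomputable def pdb (F : ℝ × ℝ → ℝ) (l β : ℝ) : ℝ := deriv (fun y => F (l, y)) β

/-- Second partial derivative of `F` with respect to its second argument `β`. -/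
noncomputable def pdbb (F : ℝ × ℝ → ℝ) (l β : ℝ) : ℝ := deriv (fun y => pdb F l y) β

/-- The scalar `Z_ϑ = G_{ab} (A_ϑ)^a (A_ϑ)^b` for the metric
`ds² = −H dτ² + dℓ² + F dα² + b² dβ²` and `A_ϑ = H^{−1/2} ∂_τ + ϑ b^{−1} ∂_β`. -/
noncomputable def Zscalar (b : ℝ) (H : ℝ → ℝ) (F : ℝ × ℝ → ℝ) (ϑ l β : ℝ) : ℝ :=
  (1 / (4 * b ^ 2)) * ((pdb F l β / F (l, β)) ^ 2 - 2 * pdbb F l β / F (l, β))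
  + ((1 - ϑ ^ 2) / 4) * ((pdl F l β / F (l, β)) ^ 2 - 2 * pdll F l β / F (l, β))
  + (ϑ ^ 2 / 4) * (2 * deriv (deriv H) l / H l - (deriv H l / H l) ^ 2
      + (deriv H l / H l) * (pdl F l β / F (l, β)))

/-! `H` and `F` are `C²` near `Lext` and `(Lext, π)`, and `H Lext = 1`,
`F (Lext, π) = (Lext - b)²` are nonzero, so `Z_ϑ` is continuous at `(Lext, π)` and the one-sided
limit is its value there. On the boundary `F (Lext, ·) = Φ²`, whence `∂βF (Lext, π) = 0` and
`∂β²F (Lext, π) = 2b (Lext - b)`, which turns the first term into `-1 / (b (Lext - b))`. -/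

lemma pdl_eq_fderiv {F : ℝ × ℝ → ℝ} {q : ℝ × ℝ} (hF : DifferentiableAt ℝ F q) :
    pdl F q.1 q.2 = fderiv ℝ F q (1, 0) :=
  (hF.hasFDerivAt.comp_hasDerivAt_of_eq q.1
    ((hasDerivAt_id q.1).prodMk (hasDerivAt_const q.1 q.2)) rfl).deriv

lemma pdb_eq_fderiv {F : ℝ × ℝ → ℝ} {q : ℝ × ℝ} (hF : DifferentiableAt ℝ F q) :
    pdb F q.1 q.2 = fderiv ℝ F q (0, 1) :=
  (hF.hasFDerivAt.comp_hasDerivAt_of_eq q.2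
    ((hasDerivAt_const q.2 q.1).prodMk (hasDerivAt_id q.2)) rfl).deriv

section PartialDerivatives

variable {F : ℝ × ℝ → ℝ} {V : Set (ℝ × ℝ)} {n : WithTop ℕ∞}

lemma ContDiffOn.pdl (hV : IsOpen V) (hF : ContDiffOn ℝ (n + 1) F V) :
    ContDiffOn ℝ n (fun q : ℝ × ℝ => pdl F q.1 q.2) V := by
  refine ((ContinuousLinearMap.apply ℝ ℝ ((1 : ℝ), (0 : ℝ))).contDiff.comp_contDiffOn
    (hF.fderiv_of_isOpen hV le_rfl)).congr fun q hq => ?_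
  exact pdl_eq_fderiv ((hF.contDiffAt (hV.mem_nhds hq)).differentiableAt (by simp))

lemma ContDiffOn.pdb (hV : IsOpen V) (hF : ContDiffOn ℝ (n + 1) F V) :
    ContDiffOn ℝ n (fun q : ℝ × ℝ => pdb F q.1 q.2) V := by
  refine ((ContinuousLinearMap.apply ℝ ℝ ((0 : ℝ), (1 : ℝ))).contDiff.comp_contDiffOn
    (hF.fderiv_of_isOpen hV le_rfl)).congr fun q hq => ?_
  exact pdb_eq_fderiv ((hF.contDiffAt (hV.mem_nhds hq)).differentiableAt (by simp))

end PartialDerivatives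

lemma continuousAt_Zscalar {b ϑ : ℝ} {H : ℝ → ℝ} {F : ℝ × ℝ → ℝ} {U : Set ℝ}
    {V : Set (ℝ × ℝ)} {p : ℝ × ℝ} (hU : IsOpen U) (hV : IsOpen V)
    (hH : ContDiffOn ℝ 2 H U) (hF : ContDiffOn ℝ 2 F V) (hpU : p.1 ∈ U) (hpV : p ∈ V)
    (hHp : H p.1 ≠ 0) (hFp : F p ≠ 0) :
    ContinuousAt (fun q : ℝ × ℝ => Zscalar b H F ϑ q.1 q.2) p := by
  have hVp := hV.mem_nhds hpV
  have hUp := hU.mem_nhds hpU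
  have cF : ContinuousAt F p := hF.continuousOn.continuousAt hVp
  have cFl : ContinuousAt (fun q : ℝ × ℝ => pdl F q.1 q.2) p :=
    (hF.pdl (n := 1) hV).continuousOn.continuousAt hVp
  have cFll : ContinuousAt (fun q : ℝ × ℝ => pdll F q.1 q.2) p :=
    -- `pdll F` is `pdl` of `fun q => pdl F q.1 q.2` by definition, and likewise for `pdbb`.
    ((hF.pdl (n := 1) hV).pdl (n := 0) hV).continuousOn.continuousAt hVp
  have cFb : ContinuousAt (fun q : ℝ × ℝ => pdb F q.1 q.2) p :=
    (hF.pdb (n := 1) hV).continuousOn.continuousAt hVp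
  have cFbb : ContinuousAt (fun q : ℝ × ℝ => pdbb F q.1 q.2) p :=
    ((hF.pdb (n := 1) hV).pdb (n := 0) hV).continuousOn.continuousAt hVp
  have cH : ContinuousAt H p.1 := hH.continuousOn.continuousAt hUp
  have hH' : ContDiffOn ℝ 1 (deriv H) U := hH.deriv_of_isOpen hU le_rfl
  have cH' : ContinuousAt (deriv H) p.1 := hH'.continuousOn.continuousAt hUp
  have cH'' : ContinuousAt (deriv (deriv H)) p.1 :=
    (hH'.continuousOn_deriv_of_isOpen hU le_rfl).continuousAt hUp
  unfold Zscalar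
  fun_prop (disch := assumption)

lemma pdb_of_boundary {F : ℝ × ℝ → ℝ} {L b : ℝ}
    (hF : ∀ β, F (L, β) = (L + b * cos β) ^ 2) (β : ℝ) :
    pdb F L β = -(2 * b * (L + b * cos β) * sin β) := by
  have hΦ : HasDerivAt (fun y => (L + b * cos y) ^ 2)
      (2 * (L + b * cos β) * (b * -sin β)) β := by
    simpa using (((hasDerivAt_cos β).const_mul b).const_add L).fun_pow 2
  rw [pdb, funext fun y => hF y, hΦ.deriv]
  ring

lemma pdbb_of_boundary {F : ℝ × ℝ → ℝ} {L b : ℝ}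
    (hF : ∀ β, F (L, β) = (L + b * cos β) ^ 2) (β : ℝ) :
    pdbb F L β = 2 * b * (b * sin β ^ 2 - (L + b * cos β) * cos β) := by
  have hΦ' : HasDerivAt (fun y => -(2 * b * (L + b * cos y) * sin y))
      (-(2 * b * (b * -sin β) * sin β + 2 * b * (L + b * cos β) * cos β)) β := by
    simpa using (((((hasDerivAt_cos β).const_mul b).const_add L).const_mul (2 * b)).fun_mul
      (hasDerivAt_sin β)).fun_neg
  rw [pdbb, funext (pdb_of_boundary hF), hΦ'.deriv]
  ring

lemma Zscalar_at_boundary {b L ϑ : ℝ} {H : ℝ → ℝ} {F : ℝ × ℝ → ℝ} (hb : b ≠ 0)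
    (hbL : L - b ≠ 0) (hF : ∀ β, F (L, β) = (L + b * cos β) ^ 2) (hH : H L = 1) :
    Zscalar b H F ϑ L π = -(1 / (b * (L - b)))
        + ((1 - ϑ ^ 2) / 4) * ((pdl F L π / (L - b) ^ 2) ^ 2 - 2 * pdll F L π / (L - b) ^ 2)
        + (ϑ ^ 2 / 4) * (2 * deriv (deriv H) L - (deriv H L) ^ 2
            + deriv H L * pdl F L π / (L - b) ^ 2) := by
  have hFπ : F (L, π) = (L - b) ^ 2 := by rw [hF, cos_pi]; ring
  rw [Zscalar, hFπ, hH, pdb_of_boundary hF, pdbb_of_boundary hF, sin_pi, cos_pi]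
  field_simp
  ring

theorem Z_tendsto_at_external_boundary_general
    (Lint Lext b : ℝ) (hLL : Lint < Lext) (hb : 0 < b) (hbL : b < Lext)
    (H : ℝ → ℝ) (F : ℝ × ℝ → ℝ)
    (U : Set ℝ) (hUopen : IsOpen U) (hUsub : Set.Ioc Lint Lext ⊆ U)
    (V : Set (ℝ × ℝ)) (hVopen : IsOpen V)
    (hVsub : Set.Ioc Lint Lext ×ˢ (Set.univ : Set ℝ) ⊆ V)
    (hH : ContDiffOn ℝ 2 H U) (hF : ContDiffOn ℝ 2 F V)
    (hFext : ∀ β : ℝ, F (Lext, β) = (Lext + b * Real.cos β) ^ 2)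
    (hHext : H Lext = 1)
    (ϑ : ℝ) :
    Filter.Tendsto (fun p : ℝ × ℝ => Zscalar b H F ϑ p.1 p.2)
      (nhdsWithin (Lext, Real.pi) {p : ℝ × ℝ | p.1 < Lext})
      (nhds (-(1 / (b * (Lext - b)))
        + ((1 - ϑ ^ 2) / 4) * ((pdl F Lext Real.pi / (Lext - b) ^ 2) ^ 2
            - 2 * pdll F Lext Real.pi / (Lext - b) ^ 2)
        + (ϑ ^ 2 / 4) * (2 * deriv (deriv H) Lext - (deriv H Lext) ^ 2
            + deriv H Lext * pdl F Lext Real.pi / (Lext - b) ^ 2))) := by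
  have hLext : Lext ∈ Set.Ioc Lint Lext := ⟨hLL, le_rfl⟩
  have hbL' : Lext - b ≠ 0 := (sub_pos.2 hbL).ne'
  have hFπ : F (Lext, π) ≠ 0 := by
    rw [hFext, cos_pi]
    simpa [← sub_eq_add_neg] using hbL'
  rw [← Zscalar_at_boundary hb.ne' hbL' hFext hHext]
  exact (continuousAt_Zscalar hUopen hVopen hH hF (hUsub hLext) (hVsub ⟨hLext, trivial⟩)
    (by rw [hHext]; exact one_ne_zero) hFπ).tendsto.mono_left nhdsWithin_le_nhds

/-- Lemma 1 of the paper: asymptotic value of `Z_ϑ` as `(ℓ, β) → (Lext, π)` with `ℓ < Lext`. -/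
theorem Z_tendsto_at_external_boundary
    (Lint Lext b : ℝ) (hLint : 0 < Lint) (hLL : Lint < Lext) (hb : 0 < b) (hbL : b < Lext)
    (H : ℝ → ℝ) (F : ℝ × ℝ → ℝ)
    (U : Set ℝ) (hUopen : IsOpen U) (hUsub : Set.Ioc Lint Lext ⊆ U)
    (V : Set (ℝ × ℝ)) (hVopen : IsOpen V)
    (hVsub : Set.Ioc Lint Lext ×ˢ (Set.univ : Set ℝ) ⊆ V)
    (hH : ContDiffOn ℝ 2 H U) (hF : ContDiffOn ℝ 2 F V)
    (hHpos : ∀ x ∈ U, 0 < H x) (hFpos : ∀ p ∈ V, 0 < F p)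
    (hFext : ∀ β : ℝ, F (Lext, β) = (Lext + b * Real.cos β) ^ 2)
    (hHext : H Lext = 1)
    (ϑ : ℝ) (hϑ : ϑ ∈ Set.Icc (0 : ℝ) 1) :
    Filter.Tendsto (fun p : ℝ × ℝ => Zscalar b H F ϑ p.1 p.2)
      (nhdsWithin (Lext, Real.pi) {p : ℝ × ℝ | p.1 < Lext})
      (nhds (-(1 / (b * (Lext - b)))
        + ((1 - ϑ ^ 2) / 4) * ((pdl F Lext Real.pi / (Lext - b) ^ 2) ^ 2
            - 2 * pdll F Lext Real.pi / (Lext - b) ^ 2)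
        + (ϑ ^ 2 / 4) * (2 * deriv (deriv H) Lext - (deriv H Lext) ^ 2
            + deriv H Lext * pdl F Lext Real.pi / (Lext - b) ^ 2))) :=
  Z_tendsto_at_external_boundary_general Lint Lext b hLL hb hbL H F U hUopen hUsub V hVopen hVsub hH
    hF hFext hHext ϑ
end

section
/- Let 0 < Lint < Lext and 0 < b < Lext be real numbers, and set Φ(β) := Lext + b·cos β. Let H : ℝ → ℝ and F : ℝ × ℝ → ℝ be twice continuously differentiable on an open set containing (Lint, Lext] and (Lint, Lext] × ℝ respectively, with H > 0 and F > 0 there. Suppose F(Lext, β) = Φ(β)² for all β, H(Lext) = 1, ∂ℓF(Lext, β) = ∂ℓ²F(Lext, β) = 0 for all β, and moreover H'(Lext) = H''(Lext) = 0. Then there exists δ > 0 such that Z_1(ℓ,β) < 0 for all (ℓ,β) ∈ (Lext−δ, Lext) × (π−δ, π+δ); that is, the null energy condition is violated in an open set sufficiently close to ℓ = Lext and β = π. -/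
open Real Filter Set
open Topology

/-! At `(Lext, π)` the boundary data make `∂βF` vanish and leave
`Z_1 = -2 ∂β²F / (4 b² F) = -1 / (b (Lext - b)) < 0`. Since `F` and `H` are `C²` near that
point, `Z_1` is continuous there and so stays negative on a small box around it. -/

lemma pdl_eq_fderiv_s3 {F : ℝ × ℝ → ℝ} {p : ℝ × ℝ} (h : DifferentiableAt ℝ F p) :
    pdl F p.1 p.2 = fderiv ℝ F p (1, 0) :=
  (h.hasFDerivAt.comp_hasDerivAt p.1
    ((hasDerivAt_id p.1).prodMk (hasDerivAt_const p.1 p.2))).deriv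

lemma pdb_eq_fderiv_s3 {F : ℝ × ℝ → ℝ} {p : ℝ × ℝ} (h : DifferentiableAt ℝ F p) :
    pdb F p.1 p.2 = fderiv ℝ F p (0, 1) :=
  (h.hasFDerivAt.comp_hasDerivAt p.2
    ((hasDerivAt_const p.2 p.1).prodMk (hasDerivAt_id p.2))).deriv

section Regularity

variable {F : ℝ × ℝ → ℝ} {V : Set (ℝ × ℝ)} {m n : WithTop ℕ∞}

lemma contDiffOn_pdl (hV : IsOpen V) (hF : ContDiffOn ℝ n F V) (hmn : m + 1 ≤ n) :
    ContDiffOn ℝ m (fun p => pdl F p.1 p.2) V :=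
  ((hF.fderiv_of_isOpen hV hmn).clm_apply contDiffOn_const).congr fun p hp =>
    pdl_eq_fderiv_s3 ((hF.differentiableOn (by rintro rfl; simp at hmn)).differentiableAt
      (hV.mem_nhds hp))

lemma contDiffOn_pdb (hV : IsOpen V) (hF : ContDiffOn ℝ n F V) (hmn : m + 1 ≤ n) :
    ContDiffOn ℝ m (fun p => pdb F p.1 p.2) V :=
  ((hF.fderiv_of_isOpen hV hmn).clm_apply contDiffOn_const).congr fun p hp =>
    pdb_eq_fderiv_s3 ((hF.differentiableOn (by rintro rfl; simp at hmn)).differentiableAt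
      (hV.mem_nhds hp))

end Regularity

section Boundary

variable {F : ℝ × ℝ → ℝ} {H : ℝ → ℝ} {L b : ℝ}

lemma pdb_eq_of_boundary (hFL : ∀ β, F (L, β) = (L + b * cos β) ^ 2) (β : ℝ) :
    pdb F L β = -(2 * b * sin β * (L + b * cos β)) := by
  rw [pdb, funext hFL, ((((hasDerivAt_cos β).const_mul b).const_add L).fun_pow 2).deriv]
  ring

lemma pdbb_pi_eq_of_boundary (hFL : ∀ β, F (L, β) = (L + b * cos β) ^ 2) :
    pdbb F L π = 2 * b * (L - b) := by
  rw [pdbb, funext (pdb_eq_of_boundary hFL),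
    (((hasDerivAt_sin π).const_mul (2 * b)).fun_mul
      (((hasDerivAt_cos π).const_mul b).const_add L)).fun_neg.deriv, sin_pi, cos_pi]
  ring

lemma Zscalar_one_eq (l β : ℝ) :
    Zscalar b H F 1 l β =
      1 / (4 * b ^ 2) * ((pdb F l β / F (l, β)) ^ 2 - 2 * pdbb F l β / F (l, β))
      + 1 / 4 * (2 * deriv (deriv H) l / H l - (deriv H l / H l) ^ 2
        + deriv H l / H l * (pdl F l β / F (l, β))) := by
  norm_num [Zscalar]

lemma Zscalar_one_boundary_pi (hb : b ≠ 0) (hbL : L - b ≠ 0)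
    (hFL : ∀ β, F (L, β) = (L + b * cos β) ^ 2) (hHL : H L = 1)
    (hH1 : deriv H L = 0) (hH2 : deriv (deriv H) L = 0) :
    Zscalar b H F 1 L π = -1 / (b * (L - b)) := by
  rw [Zscalar_one_eq, pdb_eq_of_boundary hFL, pdbb_pi_eq_of_boundary hFL, hFL, hHL, hH1, hH2,
    sin_pi, cos_pi, show L + b * -1 = L - b by ring]
  field_simp
  ring

end Boundary

lemma continuousAt_Zscalar_one {b : ℝ} {H : ℝ → ℝ} {F : ℝ × ℝ → ℝ} {U : Set ℝ}
    {V : Set (ℝ × ℝ)} (hU : IsOpen U) (hV : IsOpen V) (hH : ContDiffOn ℝ 2 H U)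
    (hF : ContDiffOn ℝ 2 F V) {p : ℝ × ℝ} (hpU : p.1 ∈ U) (hpV : p ∈ V) (hHp : H p.1 ≠ 0)
    (hFp : F p ≠ 0) :
    ContinuousAt (fun q : ℝ × ℝ => Zscalar b H F 1 q.1 q.2) p := by
  have hUp : U ∈ 𝓝 p.1 := hU.mem_nhds hpU
  have hVp : V ∈ 𝓝 p := hV.mem_nhds hpV
  have cF : ContinuousAt F p := hF.continuousOn.continuousAt hVp
  have cpdl : ContinuousAt (fun q : ℝ × ℝ => pdl F q.1 q.2) p :=
    (contDiffOn_pdl (m := 0) hV hF (by norm_num)).continuousOn.continuousAt hVp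
  have cpdb : ContinuousAt (fun q : ℝ × ℝ => pdb F q.1 q.2) p :=
    (contDiffOn_pdb (m := 0) hV hF (by norm_num)).continuousOn.continuousAt hVp
  -- `pdbb F` is definitionally `pdb` of `fun q => pdb F q.1 q.2`.
  have cpdbb : ContinuousAt (fun q : ℝ × ℝ => pdbb F q.1 q.2) p :=
    (contDiffOn_pdb (m := 0) hV (contDiffOn_pdb (m := 1) hV hF (by norm_num))
      (by norm_num)).continuousOn.continuousAt hVp
  have cH : ContinuousAt H p.1 := hH.continuousOn.continuousAt hUp
  have cH' : ContinuousAt (deriv H) p.1 :=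
    (hH.continuousOn_deriv_of_isOpen hU (by norm_num)).continuousAt hUp
  have cH'' : ContinuousAt (deriv (deriv H)) p.1 :=
    ((hH.deriv_of_isOpen (m := 1) hU (by norm_num)).continuousOn_deriv_of_isOpen hU
      le_rfl).continuousAt hUp
  simp_rw [Zscalar_one_eq]
  fun_prop (disch := assumption)

lemma exists_Ioo_prod_of_eventually {P : ℝ × ℝ → Prop} {x y : ℝ} (h : ∀ᶠ q in 𝓝 (x, y), P q) :
    ∃ δ > 0, ∀ l β, l ∈ Ioo (x - δ) (x + δ) → β ∈ Ioo (y - δ) (y + δ) → P (l, β) := by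
  obtain ⟨δ, hδ, hball⟩ := Metric.eventually_nhds_iff_ball.mp h
  refine ⟨δ, hδ, fun l β hl hβ => hball _ ?_⟩
  rw [← ball_prod_same, Real.ball_eq_Ioo, Real.ball_eq_Ioo]
  exact ⟨hl, hβ⟩

theorem NEC_violated_near_external_boundary_general
    (Lint Lext b : ℝ) (hLL : Lint < Lext) (hb : 0 < b) (hbL : b < Lext)
    (H : ℝ → ℝ) (F : ℝ × ℝ → ℝ)
    (U : Set ℝ) (hUopen : IsOpen U) (hUsub : Set.Ioc Lint Lext ⊆ U)
    (V : Set (ℝ × ℝ)) (hVopen : IsOpen V)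
    (hVsub : Set.Ioc Lint Lext ×ˢ (Set.univ : Set ℝ) ⊆ V)
    (hH : ContDiffOn ℝ 2 H U) (hF : ContDiffOn ℝ 2 F V)
    (hFext : ∀ β : ℝ, F (Lext, β) = (Lext + b * Real.cos β) ^ 2)
    (hHext : H Lext = 1)
    (hH1 : deriv H Lext = 0) (hH2 : deriv (deriv H) Lext = 0) :
    ∃ δ > 0, ∀ l β : ℝ, l ∈ Set.Ioo (Lext - δ) Lext → β ∈ Set.Ioo (Real.pi - δ) (Real.pi + δ) →
      Zscalar b H F 1 l β < 0 := by
  have hLext : Lext ∈ Ioc Lint Lext := ⟨hLL, le_rfl⟩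
  have hZ : Zscalar b H F 1 Lext π < 0 := by
    rw [Zscalar_one_boundary_pi hb.ne' (sub_pos.2 hbL).ne' hFext hHext hH1 hH2]
    exact div_neg_of_neg_of_pos neg_one_lt_zero (mul_pos hb (sub_pos.2 hbL))
  have hF0 : F (Lext, π) ≠ 0 := by
    rw [hFext, cos_pi]
    exact pow_ne_zero 2 (by linarith)
  have hcont := continuousAt_Zscalar_one (b := b) hUopen hVopen hH hF (hUsub hLext)
    (hVsub ⟨hLext, trivial⟩) (by simp [hHext]) hF0
  obtain ⟨δ, hδ, hbox⟩ := exists_Ioo_prod_of_eventually (hcont.eventually_lt continuousAt_const hZ)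
  exact ⟨δ, hδ, fun l β hl hβ => hbox l β ⟨hl.1, by linarith [hl.2]⟩ hβ⟩

/-- Part (ii) of Theorem 1 of the paper: if moreover `H'(Lext) = H''(Lext) = 0`, then `Z_1 < 0`
(violation of the null energy condition) in an open set close to `ℓ = Lext` and `β = π`. -/
theorem NEC_violated_near_external_boundary
    (Lint Lext b : ℝ) (hLint : 0 < Lint) (hLL : Lint < Lext) (hb : 0 < b) (hbL : b < Lext)
    (H : ℝ → ℝ) (F : ℝ × ℝ → ℝ)
    (U : Set ℝ) (hUopen : IsOpen U) (hUsub : Set.Ioc Lint Lext ⊆ U)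
    (V : Set (ℝ × ℝ)) (hVopen : IsOpen V)
    (hVsub : Set.Ioc Lint Lext ×ˢ (Set.univ : Set ℝ) ⊆ V)
    (hH : ContDiffOn ℝ 2 H U) (hF : ContDiffOn ℝ 2 F V)
    (hHpos : ∀ x ∈ U, 0 < H x) (hFpos : ∀ p ∈ V, 0 < F p)
    (hFext : ∀ β : ℝ, F (Lext, β) = (Lext + b * Real.cos β) ^ 2)
    (hHext : H Lext = 1)
    (hdl : ∀ β : ℝ, pdl F Lext β = 0) (hdll : ∀ β : ℝ, pdll F Lext β = 0)
    (hH1 : deriv H Lext = 0) (hH2 : deriv (deriv H) Lext = 0) :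
    ∃ δ > 0, ∀ l β : ℝ, l ∈ Set.Ioo (Lext - δ) Lext → β ∈ Set.Ioo (Real.pi - δ) (Real.pi + δ) →
      Zscalar b H F 1 l β < 0 :=
  NEC_violated_near_external_boundary_general Lint Lext b hLL hb hbL H F U hUopen hUsub V hVopen
    hVsub hH hF hFext hHext hH1 hH2
end

section
/- Let 0 < Lint < Lext and 0 < b < Lext be real numbers, and set Φ(β) := Lext + b·cos β. Let F, G, H : ℝ → ℝ be twice continuously differentiable on an open set containing (Lint, Lext], with H > 0 and F(ℓ)·Φ(β)² + G(ℓ) > 0 on (Lint, Lext] × ℝ. Suppose G(Lext) = 0, F(Lext) = H(Lext) = 1, and F'(Lext) = F''(Lext) = G'(Lext) = G''(Lext) = 0. Then, with 𝓕(ℓ,β) := F(ℓ)·Φ(β)² + G(ℓ), there exists δ > 0 such that Z_0(ℓ,β) < 0 for all (ℓ,β) ∈ (Lext−δ, Lext) × (π−δ, π+δ); that is, the weak energy condition is violated in an open set sufficiently close to ℓ = Lext and β = π. -/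
/-!
At `(Lext, π)` the boundary conditions make `𝓕 = (Lext - b)²` and kill `∂ℓ𝓕` and `∂ℓ²𝓕`, while
`∂β𝓕 = 0` and `∂β²𝓕 = 2b(Lext - b)`; hence `Z_0 = -1/(b(Lext - b)) < 0` there. Since `F` and `G`
are `C²` near `Lext`, all partial derivatives entering `Z_0` are continuous at `(Lext, π)`, so `Z_0`
stays negative on a neighbourhood.
-/

open Real Filter Set Topology

lemma Filter.Eventually.exists_forall_Ioo_prod_Ioo {P : ℝ × ℝ → Prop} {x y : ℝ}
    (h : ∀ᶠ p in 𝓝 (x, y), P p) :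
    ∃ δ > 0, ∀ l β, l ∈ Ioo (x - δ) (x + δ) → β ∈ Ioo (y - δ) (y + δ) → P (l, β) := by
  obtain ⟨δ, hδ, hball⟩ := Metric.eventually_nhds_iff_ball.1 h
  refine ⟨δ, hδ, fun l β hl hβ => hball _ ?_⟩
  rw [← ball_prod_same, Real.ball_eq_Ioo, Real.ball_eq_Ioo]
  exact ⟨hl, hβ⟩

lemma ContDiffOn.eventually_differentiableAt_of_isOpen {f : ℝ → ℝ} {U : Set ℝ} {x : ℝ}
    {n : WithTop ℕ∞} (hf : ContDiffOn ℝ n f U) (hU : IsOpen U) (hx : x ∈ U) (hn : n ≠ 0) :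
    ∀ᶠ y in 𝓝 x, DifferentiableAt ℝ f y :=
  (hU.eventually_mem hx).mono fun _ hy => (hf.contDiffAt (hU.mem_nhds hy)).differentiableAt hn

lemma ContDiffOn.differentiableAt_deriv_of_isOpen {f : ℝ → ℝ} {U : Set ℝ} {x : ℝ}
    (hf : ContDiffOn ℝ 2 f U) (hU : IsOpen U) (hx : x ∈ U) :
    DifferentiableAt ℝ (deriv f) x :=
  ((hf.deriv_of_isOpen hU (m := 1) (by norm_num)).differentiableOn one_ne_zero).differentiableAt
    (hU.mem_nhds hx)

lemma ContDiffOn.continuousOn_deriv_deriv_of_isOpen {f : ℝ → ℝ} {U : Set ℝ}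
    (hf : ContDiffOn ℝ 2 f U) (hU : IsOpen U) : ContinuousOn (deriv (deriv f)) U :=
  (hf.deriv_of_isOpen hU (m := 1) (by norm_num)).continuousOn_deriv_of_isOpen hU le_rfl

lemma Zscalar_zero (b : ℝ) (H : ℝ → ℝ) (𝓕 : ℝ × ℝ → ℝ) (l β : ℝ) :
    Zscalar b H 𝓕 0 l β =
      1 / (4 * b ^ 2) * ((pdb 𝓕 l β / 𝓕 (l, β)) ^ 2 - 2 * pdbb 𝓕 l β / 𝓕 (l, β))
      + 1 / 4 * ((pdl 𝓕 l β / 𝓕 (l, β)) ^ 2 - 2 * pdll 𝓕 l β / 𝓕 (l, β)) := by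
  simp [Zscalar]

lemma continuousAt_Zscalar_zero (b : ℝ) (H : ℝ → ℝ) {𝓕 : ℝ × ℝ → ℝ} {p₀ : ℝ × ℝ}
    (h𝓕 : ContinuousAt 𝓕 p₀) (h𝓕₀ : 𝓕 p₀ ≠ 0)
    (hl : ContinuousAt (fun p : ℝ × ℝ => pdl 𝓕 p.1 p.2) p₀)
    (hll : ContinuousAt (fun p : ℝ × ℝ => pdll 𝓕 p.1 p.2) p₀)
    (hβ : ContinuousAt (fun p : ℝ × ℝ => pdb 𝓕 p.1 p.2) p₀)
    (hββ : ContinuousAt (fun p : ℝ × ℝ => pdbb 𝓕 p.1 p.2) p₀) :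
    ContinuousAt (fun p : ℝ × ℝ => Zscalar b H 𝓕 0 p.1 p.2) p₀ := by
  simp only [Zscalar_zero, Prod.mk.eta]
  fun_prop (disch := exact h𝓕₀)

def sepAnsatz (F G φ : ℝ → ℝ) (p : ℝ × ℝ) : ℝ := F p.1 * φ p.2 + G p.1

section SepAnsatz

variable {F G φ : ℝ → ℝ} {U : Set ℝ} {l β x₀ β₀ : ℝ}

lemma pdl_sepAnsatz (hF : DifferentiableAt ℝ F l) (hG : DifferentiableAt ℝ G l) :
    pdl (sepAnsatz F G φ) l β = deriv F l * φ β + deriv G l :=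
  (hF.hasDerivAt.mul_const (φ β) |>.add hG.hasDerivAt).deriv

lemma pdll_sepAnsatz (hF : ∀ᶠ x in 𝓝 l, DifferentiableAt ℝ F x)
    (hG : ∀ᶠ x in 𝓝 l, DifferentiableAt ℝ G x)
    (hF' : DifferentiableAt ℝ (deriv F) l) (hG' : DifferentiableAt ℝ (deriv G) l) :
    pdll (sepAnsatz F G φ) l β = deriv (deriv F) l * φ β + deriv (deriv G) l := by
  have h : (fun x => pdl (sepAnsatz F G φ) x β) =ᶠ[𝓝 l]
      fun x => deriv F x * φ β + deriv G x := by
    filter_upwards [hF, hG] with x hFx hGx using pdl_sepAnsatz hFx hGx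
  rw [pdll, h.deriv_eq]
  exact (hF'.hasDerivAt.mul_const (φ β) |>.add hG'.hasDerivAt).deriv

lemma pdb_sepAnsatz (hφ : DifferentiableAt ℝ φ β) :
    pdb (sepAnsatz F G φ) l β = F l * deriv φ β :=
  ((hφ.hasDerivAt.const_mul (F l)).add_const (G l)).deriv

lemma pdbb_sepAnsatz (hφ : Differentiable ℝ φ) (hφ' : DifferentiableAt ℝ (deriv φ) β) :
    pdbb (sepAnsatz F G φ) l β = F l * deriv (deriv φ) β := by
  have h : (fun y => pdb (sepAnsatz F G φ) l y) = fun y => F l * deriv φ y :=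
    funext fun _ => pdb_sepAnsatz (hφ _)
  rw [pdbb, h]
  exact (hφ'.hasDerivAt.const_mul (F l)).deriv

lemma Zscalar_zero_sepAnsatz_of_flat (b : ℝ) (H : ℝ → ℝ) (hU : IsOpen U) (hx₀ : x₀ ∈ U)
    (hF : ContDiffOn ℝ 2 F U) (hG : ContDiffOn ℝ 2 G U) (hφ : ContDiff ℝ 2 φ)
    (hF₀ : F x₀ = 1) (hG₀ : G x₀ = 0) (hF₁ : deriv F x₀ = 0) (hF₂ : deriv (deriv F) x₀ = 0)
    (hG₁ : deriv G x₀ = 0) (hG₂ : deriv (deriv G) x₀ = 0) (β : ℝ) :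
    Zscalar b H (sepAnsatz F G φ) 0 x₀ β =
      1 / (4 * b ^ 2) * ((deriv φ β / φ β) ^ 2 - 2 * deriv (deriv φ) β / φ β) := by
  have hFd := hF.eventually_differentiableAt_of_isOpen hU hx₀ two_ne_zero
  have hGd := hG.eventually_differentiableAt_of_isOpen hU hx₀ two_ne_zero
  have hφd : Differentiable ℝ φ := hφ.differentiable (by norm_num)
  have hφ' : Differentiable ℝ (deriv φ) := (hφ.deriv' (n := 1)).differentiable one_ne_zero
  rw [Zscalar_zero, pdl_sepAnsatz hFd.self_of_nhds hGd.self_of_nhds,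
    pdll_sepAnsatz hFd hGd (hF.differentiableAt_deriv_of_isOpen hU hx₀)
      (hG.differentiableAt_deriv_of_isOpen hU hx₀),
    pdb_sepAnsatz (hφd β), pdbb_sepAnsatz hφd (hφ' β)]
  simp [sepAnsatz, hF₀, hG₀, hF₁, hF₂, hG₁, hG₂]

lemma continuousAt_Zscalar_zero_sepAnsatz (b : ℝ) (H : ℝ → ℝ) (hU : IsOpen U) (hx₀ : x₀ ∈ U)
    (hF : ContDiffOn ℝ 2 F U) (hG : ContDiffOn ℝ 2 G U) (hφ : ContDiff ℝ 2 φ)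
    (h𝓕₀ : sepAnsatz F G φ (x₀, β₀) ≠ 0) :
    ContinuousAt (fun p : ℝ × ℝ => Zscalar b H (sepAnsatz F G φ) 0 p.1 p.2) (x₀, β₀) := by
  have hU₀ : ∀ᶠ p : ℝ × ℝ in 𝓝 (x₀, β₀), p.1 ∈ U :=
    continuousAt_fst.preimage_mem_nhds (hU.mem_nhds hx₀)
  have hF₀ := hF.continuousOn.continuousAt (hU.mem_nhds hx₀)
  have hG₀ := hG.continuousOn.continuousAt (hU.mem_nhds hx₀)
  have hF₁ := (hF.continuousOn_deriv_of_isOpen hU (by norm_num)).continuousAt (hU.mem_nhds hx₀)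
  have hG₁ := (hG.continuousOn_deriv_of_isOpen hU (by norm_num)).continuousAt (hU.mem_nhds hx₀)
  have hF₂ := (hF.continuousOn_deriv_deriv_of_isOpen hU).continuousAt (hU.mem_nhds hx₀)
  have hG₂ := (hG.continuousOn_deriv_deriv_of_isOpen hU).continuousAt (hU.mem_nhds hx₀)
  have hφd : Differentiable ℝ φ := hφ.differentiable (by norm_num)
  have hφ₁ : ContDiff ℝ 1 (deriv φ) := hφ.deriv' (n := 1)
  have hφ₀ : Continuous φ := hφ.continuous
  have hφ₁c : Continuous (deriv φ) := hφ₁.continuous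
  have hφ₂ : Continuous (deriv (deriv φ)) := hφ₁.continuous_deriv le_rfl
  refine continuousAt_Zscalar_zero b H (by unfold sepAnsatz; fun_prop) h𝓕₀ ?_ ?_ ?_ ?_
  · refine ContinuousAt.congr (f := fun p => deriv F p.1 * φ p.2 + deriv G p.1) (by fun_prop) ?_
    filter_upwards [hU₀] with p hp
    exact (pdl_sepAnsatz (hF.eventually_differentiableAt_of_isOpen hU hp two_ne_zero).self_of_nhds
      (hG.eventually_differentiableAt_of_isOpen hU hp two_ne_zero).self_of_nhds).symm
  · refine ContinuousAt.congr
      (f := fun p => deriv (deriv F) p.1 * φ p.2 + deriv (deriv G) p.1) (by fun_prop) ?_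
    filter_upwards [hU₀] with p hp
    exact (pdll_sepAnsatz (hF.eventually_differentiableAt_of_isOpen hU hp two_ne_zero)
      (hG.eventually_differentiableAt_of_isOpen hU hp two_ne_zero)
      (hF.differentiableAt_deriv_of_isOpen hU hp) (hG.differentiableAt_deriv_of_isOpen hU hp)).symm
  · refine ContinuousAt.congr (f := fun p => F p.1 * deriv φ p.2) (by fun_prop) ?_
    exact Eventually.of_forall fun p => (pdb_sepAnsatz (hφd p.2)).symm
  · refine ContinuousAt.congr (f := fun p => F p.1 * deriv (deriv φ) p.2) (by fun_prop) ?_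
    exact Eventually.of_forall fun p =>
      (pdbb_sepAnsatz hφd (hφ₁.differentiable one_ne_zero p.2)).symm

end SepAnsatz

lemma deriv_add_mul_cos_sq (c b : ℝ) :
    deriv (fun β => (c + b * cos β) ^ 2) = fun β => -(2 * b * sin β * (c + b * cos β)) := by
  funext β
  exact (((hasDerivAt_cos β).const_mul b |>.const_add c).pow 2).deriv.trans (by ring)

lemma deriv_add_mul_cos_sq_pi (c b : ℝ) : deriv (fun β => (c + b * cos β) ^ 2) π = 0 := by
  simp

lemma deriv_deriv_add_mul_cos_sq_pi (c b : ℝ) :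
    deriv (deriv fun β => (c + b * cos β) ^ 2) π = 2 * b * (c - b) := by
  have h := (((hasDerivAt_sin π).const_mul (2 * b)).mul
    ((hasDerivAt_cos π).const_mul b |>.const_add c)).neg
  rw [deriv_add_mul_cos_sq]
  exact h.deriv.trans (by simp [sub_eq_add_neg])

theorem WEC_violated_near_external_boundary_product_ansatz_general
    (Lint Lext b : ℝ) (hLL : Lint < Lext) (hb : 0 < b) (hbL : b < Lext)
    (F G H : ℝ → ℝ)
    (U : Set ℝ) (hUopen : IsOpen U) (hUsub : Set.Ioc Lint Lext ⊆ U)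
    (hF : ContDiffOn ℝ 2 F U) (hG : ContDiffOn ℝ 2 G U)
    (hGext : G Lext = 0) (hFext : F Lext = 1)
    (hF1 : deriv F Lext = 0) (hF2 : deriv (deriv F) Lext = 0)
    (hG1 : deriv G Lext = 0) (hG2 : deriv (deriv G) Lext = 0) :
    ∃ δ > 0, ∀ l β : ℝ, l ∈ Set.Ioo (Lext - δ) Lext → β ∈ Set.Ioo (Real.pi - δ) (Real.pi + δ) →
      Zscalar b H (fun p : ℝ × ℝ => F p.1 * (Lext + b * Real.cos p.2) ^ 2 + G p.1) 0 l β < 0 := by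
  set φ : ℝ → ℝ := fun β => (Lext + b * cos β) ^ 2
  have hx₀ : Lext ∈ U := hUsub ⟨hLL, le_rfl⟩
  have hφ : ContDiff ℝ 2 φ := by fun_prop
  have hφπ : φ π = (Lext - b) ^ 2 := by simp [φ]; ring
  have hφ'π : deriv φ π = 0 := deriv_add_mul_cos_sq_pi Lext b
  have hφ''π : deriv (deriv φ) π = 2 * b * (Lext - b) := deriv_deriv_add_mul_cos_sq_pi Lext b
  have hgap : 0 < Lext - b := sub_pos.mpr hbL
  have hZπ : Zscalar b H (sepAnsatz F G φ) 0 Lext π < 0 := calc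
    _ = 1 / (4 * b ^ 2) *
          ((0 / (Lext - b) ^ 2) ^ 2 - 2 * (2 * b * (Lext - b)) / (Lext - b) ^ 2) := by
      rw [Zscalar_zero_sepAnsatz_of_flat b H hUopen hx₀ hF hG hφ hFext hGext hF1 hF2 hG1 hG2,
        hφ'π, hφ''π, hφπ]
    _ = -(1 / (b * (Lext - b))) := by field_simp; ring
    _ < 0 := neg_lt_zero.mpr (by positivity)
  have hZ := continuousAt_Zscalar_zero_sepAnsatz (β₀ := π) b H hUopen hx₀ hF hG hφ
    (by simpa [sepAnsatz, hFext, hGext, hφπ] using hgap.ne')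
  obtain ⟨δ, hδ, hneg⟩ := (hZ.eventually (gt_mem_nhds hZπ)).exists_forall_Ioo_prod_Ioo
  exact ⟨δ, hδ, fun l β hl hβ => hneg l β ⟨hl.1, hl.2.trans (by linarith)⟩ hβ⟩

/-- Part (i) of the Corollary of the paper: for the product ansatz
`𝓕(ℓ,β) = F(ℓ)(Lext + b cos β)² + G(ℓ)`, under the stated interpolation conditions, `Z_0 < 0`
(violation of the weak energy condition) in an open set close to `ℓ = Lext` and `β = π`. -/
theorem WEC_violated_near_external_boundary_product_ansatz
    (Lint Lext b : ℝ) (hLint : 0 < Lint) (hLL : Lint < Lext) (hb : 0 < b) (hbL : b < Lext)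
    (F G H : ℝ → ℝ)
    (U : Set ℝ) (hUopen : IsOpen U) (hUsub : Set.Ioc Lint Lext ⊆ U)
    (hF : ContDiffOn ℝ 2 F U) (hG : ContDiffOn ℝ 2 G U) (hH : ContDiffOn ℝ 2 H U)
    (hHpos : ∀ x ∈ U, 0 < H x)
    (hcalFpos : ∀ l ∈ Set.Ioc Lint Lext, ∀ β : ℝ,
      0 < F l * (Lext + b * Real.cos β) ^ 2 + G l)
    (hGext : G Lext = 0) (hFext : F Lext = 1) (hHext : H Lext = 1)
    (hF1 : deriv F Lext = 0) (hF2 : deriv (deriv F) Lext = 0)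
    (hG1 : deriv G Lext = 0) (hG2 : deriv (deriv G) Lext = 0) :
    ∃ δ > 0, ∀ l β : ℝ, l ∈ Set.Ioo (Lext - δ) Lext → β ∈ Set.Ioo (Real.pi - δ) (Real.pi + δ) →
      Zscalar b H (fun p : ℝ × ℝ => F p.1 * (Lext + b * Real.cos p.2) ^ 2 + G p.1) 0 l β < 0 :=
  WEC_violated_near_external_boundary_product_ansatz_general Lint Lext b hLL hb hbL F G H U hUopen
    hUsub hF hG hGext hFext hF1 hF2 hG1 hG2
end

section
/- Let 0 < b < L and 0 < A < 1 be real numbers. Define θ : ℝ → ℝ by θ(τ) := −(A/√(1−A²)) · sin(Aτ/b) / (L + b·cos(Aτ/b)). Then θ is differentiable with θ'(τ) = −(A²/(b·√(1−A²))) · (b + L·cos(Aτ/b)) / (L + b·cos(Aτ/b))², and since L > b there exist τ₁ and τ₂ with θ'(τ₁) < 0 and θ'(τ₂) > 0; i.e., the derivative of the expansion changes sign along the congruence. -/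
open Real Set

/-
The expansion is a constant multiple of `u ↦ sin u / (L + b cos u)` evaluated at `u = Aτ/b`;
by the quotient rule and `sin² + cos² = 1` the derivative of that map is
`(b + L cos u) / (L + b cos u)²`. The denominator stays positive since `b < L`, while the
numerator is `b + L > 0` at `u = 0` and `b - L < 0` at `u = π`.
-/

theorem add_mul_cos_pos {a c : ℝ} (h : |c| < a) (x : ℝ) : 0 < a + c * cos x := by
  have : |c * cos x| ≤ |c| := by
    rw [abs_mul]
    exact mul_le_of_le_one_right (abs_nonneg c) (abs_cos_le_one x)
  linarith [neg_abs_le (c * cos x)]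

theorem hasDerivAt_sin_div_add_mul_cos {a c x : ℝ} (h : a + c * cos x ≠ 0) :
    HasDerivAt (fun x => sin x / (a + c * cos x))
      ((c + a * cos x) / (a + c * cos x) ^ 2) x := by
  have hden : HasDerivAt (fun x => a + c * cos x) (c * -sin x) x :=
    ((hasDerivAt_cos x).const_mul c).const_add a
  refine ((hasDerivAt_sin x).div hden h).congr_deriv ?_
  congr 1
  linear_combination c * sin_sq_add_cos_sq x

/-- Section 4.1 of the paper: the expansion `θ(τ)` of the geodesic congruence winding around
the `β` direction of the infinite toroidal tube is differentiable, its derivative is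
`θ'(τ) = −(A²/(b√(1−A²)))·(b + L cos(Aτ/b))/(L + b cos(Aτ/b))²`, and since `L > b` this
derivative changes sign along the congruence. -/
theorem expansion_derivative_changes_sign
    (b L A : ℝ) (hb : 0 < b) (hbL : b < L) (hA0 : 0 < A) (hA1 : A < 1) :
    (∀ τ : ℝ,
      HasDerivAt
        (fun τ : ℝ => -(A / Real.sqrt (1 - A ^ 2)) * Real.sin (A * τ / b)
          / (L + b * Real.cos (A * τ / b)))
        (-(A ^ 2 / (b * Real.sqrt (1 - A ^ 2))) * (b + L * Real.cos (A * τ / b))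
          / (L + b * Real.cos (A * τ / b)) ^ 2) τ) ∧
    (∃ τ₁ τ₂ : ℝ,
      -(A ^ 2 / (b * Real.sqrt (1 - A ^ 2))) * (b + L * Real.cos (A * τ₁ / b))
          / (L + b * Real.cos (A * τ₁ / b)) ^ 2 < 0 ∧
      0 < -(A ^ 2 / (b * Real.sqrt (1 - A ^ 2))) * (b + L * Real.cos (A * τ₂ / b))
          / (L + b * Real.cos (A * τ₂ / b)) ^ 2) := by
  have hden : ∀ x, 0 < L + b * cos x := add_mul_cos_pos (by rwa [abs_of_pos hb])
  have hsqrt : 0 < √(1 - A ^ 2) := sqrt_pos.2 (by nlinarith)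
  have hK : 0 < A ^ 2 / (b * √(1 - A ^ 2)) := by positivity
  refine ⟨fun τ => ?_, 0, π * b / A, ?_, ?_⟩
  · have hu : HasDerivAt (fun τ => A * τ / b) (A / b) τ := by
      simpa using ((hasDerivAt_id τ).const_mul A).div_const b
    have hθ := ((hasDerivAt_sin_div_add_mul_cos (hden (A * τ / b)).ne').comp τ hu).const_mul
      (-(A / √(1 - A ^ 2)))
    simp only [Function.comp_def, ← mul_div_assoc] at hθ
    refine hθ.congr_deriv ?_
    field_simp
  · rw [mul_zero, zero_div, cos_zero]
    exact div_neg_of_neg_of_pos (by nlinarith) (pow_pos (by linarith) 2)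
  · rw [show A * (π * b / A) / b = π by field_simp, cos_pi]
    exact div_pos (by nlinarith) (pow_pos (by linarith) 2)
end

section
/- Let 0 < b < L be real numbers and set Φ(β) := L + b·cos β. Define σ(β) := −1/b − cos β/Φ(β), p_α := 1/b, and p_β(β) := cos β/Φ(β). Then for every β, σ(β) + p_β(β) = −1/b < 0, and σ(β) + p_α = −cos β/Φ(β), which is strictly negative for every β ∈ [0, π/2) ∪ (3π/2, 2π). Hence the null energy condition σ + p_i ≥ 0 fails. -/
open Real Set

/-- Section 4.2 of the paper: for the external thin shell of the truncated infinite toroidal tube,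
with surface density `σ(β) = −1/b − cos β/Φ(β)` and anisotropic pressures `p_α = 1/b`,
`p_β(β) = cos β/Φ(β)` (where `Φ(β) = L + b cos β`), one has `σ + p_β = −1/b < 0` everywhere
and `σ + p_α = −cos β/Φ(β) < 0` for `β ∈ [0, π/2) ∪ (3π/2, 2π)`; hence the null energy
condition `σ + p_i ≥ 0` fails. -/
theorem external_shell_violates_NEC
    (b L : ℝ) (hb : 0 < b) (hbL : b < L) :
    (∀ β : ℝ,
      (-(1 / b) - Real.cos β / (L + b * Real.cos β)) + Real.cos β / (L + b * Real.cos β)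
        = -(1 / b) ∧ -(1 / b) < 0) ∧
    (∀ β : ℝ,
      (-(1 / b) - Real.cos β / (L + b * Real.cos β)) + 1 / b
        = -(Real.cos β / (L + b * Real.cos β))) ∧
    (∀ β ∈ Set.Ico (0 : ℝ) (Real.pi / 2) ∪ Set.Ioo (3 * Real.pi / 2) (2 * Real.pi),
      (-(1 / b) - Real.cos β / (L + b * Real.cos β)) + 1 / b < 0) := by
  have hΦ : ∀ β : ℝ, 0 < L + b * Real.cos β := by
    intro β
    have h1 : -1 ≤ Real.cos β := Real.neg_one_le_cos β
    nlinarith [Real.neg_one_le_cos β]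
  refine ⟨fun β => ⟨by ring, neg_neg_of_pos (by positivity)⟩, fun β => by ring, fun β hβ => ?_⟩
  have hcos : 0 < Real.cos β := by
    rcases hβ with ⟨h0, h1⟩ | ⟨h0, h1⟩
    · exact Real.cos_pos_of_mem_Ioo ⟨lt_of_lt_of_le (by linarith [Real.pi_pos]) h0, h1⟩
    · have : Real.cos β = Real.cos (β - 2 * Real.pi) := by
        rw [Real.cos_sub_two_pi]
      rw [this]
      exact Real.cos_pos_of_mem_Ioo ⟨by linarith, by linarith [Real.pi_pos]⟩
  have := hΦ β
  have : 0 < Real.cos β / (L + b * Real.cos β) := div_pos hcos this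
  linarith
end

section
/- Let 0 < b < Lext be real numbers and set Φ(β) := Lext + b·cos β. For any real number h and any function f : ℝ → ℝ, there is no β for which the three quantities E₁(β) := −1/b − cos β/Φ(β) + f(β)/(2Φ(β)²), E₂(β) := Φ(β)²·(1/b − h/2), and E₃(β) := (cos β/Φ(β) − h/2 − f(β)/(2Φ(β)²))·b² vanish simultaneously. In particular the surface stress tensor of the external shell cannot vanish for any choice of interpolating functions. -/
open Real Set

/-- Section 3.3 of the paper: the surface stress tensor of the external shell cannot vanish.
With `Φ(β) = Lext + b cos β`, for any value `h` of `H'(Lext)` and any profile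
`f(β) = ∂ℓ𝓕(Lext, β)`, the three components
`E₁ = −1/b − cos β/Φ + f/(2Φ²)`, `E₂ = Φ²(1/b − h/2)`, `E₃ = (cos β/Φ − h/2 − f/(2Φ²))·b²`
of (8π times) the distributional energy-momentum tensor on `Σext` never vanish simultaneously. -/
theorem external_shell_cannot_vanish
    (b Lext : ℝ) (hb : 0 < b) (hbL : b < Lext) (h : ℝ) (f : ℝ → ℝ) :
    ¬ ∃ β : ℝ,
      (-(1 / b) - Real.cos β / (Lext + b * Real.cos β)
          + f β / (2 * (Lext + b * Real.cos β) ^ 2) = 0) ∧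
      ((Lext + b * Real.cos β) ^ 2 * (1 / b - h / 2) = 0) ∧
      ((Real.cos β / (Lext + b * Real.cos β) - h / 2
          - f β / (2 * (Lext + b * Real.cos β) ^ 2)) * b ^ 2 = 0) := by
  rintro ⟨β, h1, h2, h3⟩
  have hc : -1 ≤ Real.cos β := neg_one_le_cos β
  have hΦ : 0 < Lext + b * Real.cos β := by nlinarith
  have hΦ2 : (Lext + b * Real.cos β) ^ 2 ≠ 0 := by positivity
  have hb2 : (b : ℝ) ^ 2 ≠ 0 := by positivity
  have e2 : 1 / b - h / 2 = 0 := by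
    rcases mul_eq_zero.mp h2 with h' | h'
    · exact absurd h' hΦ2
    · exact h'
  have e3 : Real.cos β / (Lext + b * Real.cos β) - h / 2
      - f β / (2 * (Lext + b * Real.cos β) ^ 2) = 0 := by
    rcases mul_eq_zero.mp h3 with h' | h'
    · exact h'
    · exact absurd h' hb2
  have hbne : (1:ℝ) / b > 0 := by positivity
  linarith [h1, e2, e3]
end

section
/- Let 0 < Lint < Lext and m ≠ 0 be real numbers. Define F(ℓ) := (ℓ−Lint)²·[3ℓ² − 2ℓ(4Lext−Lint) + 6Lext² − 4Lext·Lint + Lint²]/(Lext−Lint)⁴, G(ℓ) := (m²/π²)·(Lext−ℓ)³(3ℓ+Lext−4Lint)/(Lext−Lint)⁴, and H(ℓ) := [2ℓ(Lext−ℓ)³ + 2ℓLint(ℓ²−3ℓLext+3Lext²) − Lint(Lext³+3Lext²Lint−3LextLint²+Lint³)]/(Lint(Lext−Lint)³). Then F(ℓ) > 0, G(ℓ) > 0 and H(ℓ) > 0 for every ℓ ∈ (Lint, Lext). In particular the quadratic q(ℓ) := 3ℓ² − 2ℓ(4Lext−Lint) + 6Lext² − 4Lext·Lint + Lint² has negative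 discriminant and is positive for all real ℓ. -/
open Real Set

/-- Section 4.4 of the paper: the Hermite-interpolation ansatz functions `F`, `G`, `H` of
equation (4.24) are strictly positive on `(Lint, Lext)`. In particular the quadratic factor
`q(ℓ) = 3ℓ² − 2ℓ(4Lext−Lint) + 6Lext² − 4Lext·Lint + Lint²` has negative discriminant and is
positive for every real `ℓ`. -/
theorem hermite_interpolating_functions_positive
    (Lint Lext m : ℝ) (hLint : 0 < Lint) (hLL : Lint < Lext) (hm : m ≠ 0) :
    let F : ℝ → ℝ := fun l =>
      (l - Lint) ^ 2 * (3 * l ^ 2 - 2 * l * (4 * Lext - Lint)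
        + 6 * Lext ^ 2 - 4 * Lext * Lint + Lint ^ 2) / (Lext - Lint) ^ 4
    let G : ℝ → ℝ := fun l =>
      (m ^ 2 / Real.pi ^ 2) * ((Lext - l) ^ 3 * (3 * l + Lext - 4 * Lint) / (Lext - Lint) ^ 4)
    let H : ℝ → ℝ := fun l =>
      (2 * l * (Lext - l) ^ 3 + 2 * l * Lint * (l ^ 2 - 3 * l * Lext + 3 * Lext ^ 2)
        - Lint * (Lext ^ 3 + 3 * Lext ^ 2 * Lint - 3 * Lext * Lint ^ 2 + Lint ^ 3))
        / (Lint * (Lext - Lint) ^ 3)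
    let q : ℝ → ℝ := fun l =>
      3 * l ^ 2 - 2 * l * (4 * Lext - Lint) + 6 * Lext ^ 2 - 4 * Lext * Lint + Lint ^ 2
    (∀ l ∈ Set.Ioo Lint Lext, 0 < F l ∧ 0 < G l ∧ 0 < H l) ∧
    (2 * (4 * Lext - Lint)) ^ 2 - 4 * 3 * (6 * Lext ^ 2 - 4 * Lext * Lint + Lint ^ 2) < 0 ∧
    (∀ l : ℝ, 0 < q l) := by
  intro F G H q
  have hd : (0:ℝ) < Lext - Lint := by linarith
  have hd4 : (0:ℝ) < (Lext - Lint) ^ 4 := by positivity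
  have hd3 : (0:ℝ) < (Lext - Lint) ^ 3 := by positivity
  have hq : ∀ l : ℝ, 0 < q l := by
    intro l
    show 0 < 3 * l ^ 2 - 2 * l * (4 * Lext - Lint) + 6 * Lext ^ 2 - 4 * Lext * Lint + Lint ^ 2
    nlinarith [sq_nonneg (l - Lext), sq_nonneg (Lext - Lint),
      sq_nonneg (3 * l - 4 * Lext + Lint)]
  refine ⟨?_, by nlinarith [sq_nonneg (Lext - Lint)], hq⟩
  intro l hl
  obtain ⟨h1, h2⟩ := hl
  have hu : 0 < l - Lint := by linarith
  have hv : 0 < Lext - l := by linarith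
  refine ⟨?_, ?_, ?_⟩
  · exact div_pos (mul_pos (by positivity) (hq l)) hd4
  · have hmpi : 0 < m ^ 2 / Real.pi ^ 2 := by
      have : (0:ℝ) < Real.pi := Real.pi_pos
      positivity
    have h3 : 0 < 3 * l + Lext - 4 * Lint := by linarith
    exact mul_pos hmpi (div_pos (mul_pos (by positivity) h3) hd4)
  · have hnum : 2 * l * (Lext - l) ^ 3 + 2 * l * Lint * (l ^ 2 - 3 * l * Lext + 3 * Lext ^ 2)
        - Lint * (Lext ^ 3 + 3 * Lext ^ 2 * Lint - 3 * Lext * Lint ^ 2 + Lint ^ 3)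
        = Lint * (Lext - Lint) ^ 3 + 2 * (l - Lint) * (Lext - l) ^ 3 := by ring
    show 0 < (2 * l * (Lext - l) ^ 3 + 2 * l * Lint * (l ^ 2 - 3 * l * Lext + 3 * Lext ^ 2)
        - Lint * (Lext ^ 3 + 3 * Lext ^ 2 * Lint - 3 * Lext * Lint ^ 2 + Lint ^ 3))
        / (Lint * (Lext - Lint) ^ 3)
    rw [hnum]
    have : 0 < Lint * (Lext - Lint) ^ 3 + 2 * (l - Lint) * (Lext - l) ^ 3 := by positivity
    exact div_pos this (by positivity)
end
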